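/- With the abstract τ-EC setting as above, if {R_i}_{i∈I} is a family of equivalence relations on S, each of which is τ-EC invariant (both directions), then the equivalence closure of their union, E = (⋃_i R_i)*, is also τ-EC invariant. -/
import Mathlib


/-- `ec₁ R‡ ec₂`: every element of `ec₂` is related to by some element of `ec₁`. -/
def ECRel {S : Type*} (R : S → S → Prop) (ec₁ ec₂ : Set S) : Prop :=
  ∀ b ∈ ec₂, ∃ a ∈ ec₁, R a b

/-- `A` reaches the end component `ec`. -/
def ReachesEC {S : Type*} (reach : S → S → Prop) (EC : Set (Set S))
    (A : S) (ec : Set S) : Prop :=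
  ec ∈ EC ∧ ∃ a ∈ ec, reach A a

/-- `R` is τ-EC invariant (both directions). -/
def TauECInvariant {S : Type*} (reach : S → S → Prop) (EC : Set (Set S))
    (R : S → S → Prop) : Prop :=
  ∀ A B, R A B →
    (∀ ec₁, ReachesEC reach EC A ec₁ →
      ∃ ec₂, ReachesEC reach EC B ec₂ ∧ ECRel R ec₁ ec₂) ∧
    (∀ ec₂, ReachesEC reach EC B ec₂ →
      ∃ ec₁, ReachesEC reach EC A ec₁ ∧ ECRel (fun b a => R a b) ec₂ ec₁)

/-- The equivalence closure of a relation, as the intersection of all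
equivalence relations containing it. -/
def EqvClosure {S : Type*} (R : S → S → Prop) : S → S → Prop :=
  fun a b => ∀ Q : S → S → Prop, Equivalence Q → (∀ x y, R x y → Q x y) → Q a b

/-- Lemma 3.13 of the paper: the equivalence closure of a union of τ-EC
invariant equivalences is τ-EC invariant. -/
theorem stmt5 {S : Type*} {I : Type*} (reach : S → S → Prop) (EC : Set (Set S))
    (R : I → S → S → Prop)
    (hEq : ∀ i, Equivalence (R i))
    (hInv : ∀ i, TauECInvariant reach EC (R i)) :
    TauECInvariant reach EC (EqvClosure (fun a b => ∃ i, R i a b)) := by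
  set E := EqvClosure (fun a b => ∃ i, R i a b) with hE
  have hErefl : ∀ a, E a a := fun a Q hQ _ => hQ.refl a
  have hEsymm : ∀ {a b}, E a b → E b a := fun h Q hQ hR => hQ.symm (h Q hQ hR)
  have hEtrans : ∀ {a b c}, E a b → E b c → E a c :=
    fun h h' Q hQ hR => hQ.trans (h Q hQ hR) (h' Q hQ hR)
  have hEofR : ∀ i x y, R i x y → E x y := fun i x y h Q _ hR => hR x y ⟨i, h⟩
  -- The "good" relation: the invariance condition with ECRel E.
  set Q : S → S → Prop := fun A B =>
    (∀ ec₁, ReachesEC reach EC A ec₁ →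
      ∃ ec₂, ReachesEC reach EC B ec₂ ∧ ECRel E ec₁ ec₂) ∧
    (∀ ec₂, ReachesEC reach EC B ec₂ →
      ∃ ec₁, ReachesEC reach EC A ec₁ ∧ ECRel (fun b a => E a b) ec₂ ec₁) with hQdef
  have hQequiv : Equivalence Q := by
    constructor
    · intro A
      refine ⟨fun ec h => ⟨ec, h, fun b hb => ⟨b, hb, hErefl b⟩⟩,
              fun ec h => ⟨ec, h, fun b hb => ⟨b, hb, hErefl b⟩⟩⟩
    · rintro A B ⟨h1, h2⟩
      refine ⟨fun ec h => ?_, fun ec h => ?_⟩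
      · obtain ⟨ec', h', hrel⟩ := h2 ec h
        exact ⟨ec', h', fun b hb => (hrel b hb).imp fun a ⟨ha, hab⟩ => ⟨ha, hEsymm hab⟩⟩
      · obtain ⟨ec', h', hrel⟩ := h1 ec h
        exact ⟨ec', h', fun b hb => (hrel b hb).imp fun a ⟨ha, hab⟩ => ⟨ha, hEsymm hab⟩⟩
    · rintro A B C ⟨h1, h2⟩ ⟨h3, h4⟩
      refine ⟨fun ec h => ?_, fun ec h => ?_⟩
      · obtain ⟨ec', h', hrel⟩ := h1 ec h
        obtain ⟨ec'', h'', hrel'⟩ := h3 ec' h'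
        refine ⟨ec'', h'', fun b hb => ?_⟩
        obtain ⟨a, ha, hab⟩ := hrel' b hb
        obtain ⟨c, hc, hca⟩ := hrel a ha
        exact ⟨c, hc, hEtrans hca hab⟩
      · obtain ⟨ec', h', hrel⟩ := h4 ec h
        obtain ⟨ec'', h'', hrel'⟩ := h2 ec' h'
        refine ⟨ec'', h'', fun b hb => ?_⟩
        obtain ⟨a, ha, hab⟩ := hrel' b hb
        obtain ⟨c, hc, hca⟩ := hrel a ha
        exact ⟨c, hc, hEtrans hab hca⟩
  have hQcontains : ∀ x y, (∃ i, R i x y) → Q x y := by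
    rintro x y ⟨i, hxy⟩
    obtain ⟨h1, h2⟩ := hInv i x y hxy
    refine ⟨fun ec h => ?_, fun ec h => ?_⟩
    · obtain ⟨ec', h', hrel⟩ := h1 ec h
      exact ⟨ec', h', fun b hb => (hrel b hb).imp fun a ⟨ha, hab⟩ => ⟨ha, hEofR i _ _ hab⟩⟩
    · obtain ⟨ec', h', hrel⟩ := h2 ec h
      exact ⟨ec', h', fun b hb => (hrel b hb).imp fun a ⟨ha, hab⟩ => ⟨ha, hEofR i _ _ hab⟩⟩
  intro A B hAB
  exact hAB Q hQequiv hQcontains
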